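/- Suppose s and t are coprime and υ is a t-core. Then the partition τ with s-core κ_{s,t} and s-quotient (υ, υ, ..., υ) (all s components equal to υ) is a t-core. -/

import Mathlib

open Classical

/-- A partition: an infinite weakly decreasing sequence of non-negative integers
with finite sum.  Here `f n` denotes the part `λ_{n+1}`. -/
structure SeqPartition where
  f : ℕ → ℕ
  antitone : ∀ ⦃m n : ℕ⦄, m ≤ n → f n ≤ f m
  eventually_zero : ∃ N, ∀ n, N ≤ n → f n = 0

instance : Inhabited SeqPartition :=
  ⟨⟨fun _ => 0, fun _ _ _ => le_rfl, ⟨0, fun _ _ => rfl⟩⟩⟩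

namespace SeqPartition

/-- The beta-set `β_r(λ) = {λ_i - i + r : i ≥ 1}`. -/
def beta (r : ℤ) (l : SeqPartition) : Set ℤ :=
  {x | ∃ n : ℕ, x = (l.f n : ℤ) - (n + 1) + r}

/-- The size `|λ|` of a partition. -/
noncomputable def size (l : SeqPartition) : ℕ := ∑ᶠ n, l.f n

/-- The partition whose beta-set (for some shift `r`) is `B`, if it exists. -/
noncomputable def ofBeta (B : Set ℤ) : SeqPartition :=
  if h : ∃ l : SeqPartition, ∃ r : ℤ, beta r l = B then h.choose else default

/-- The beta-set of the `s`-core: beads pushed up their runners as far as possible.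
A position `x` is occupied iff the number of beads of `B` weakly above it on its runner
exceeds the number of gaps strictly below it on its runner. -/
def coreBeta (s : ℕ) (B : Set ℤ) : Set ℤ :=
  {x | ({y : ℤ | y ∉ B ∧ y ≡ x [ZMOD (s : ℤ)] ∧ y < x}).ncard
      < ({b : ℤ | b ∈ B ∧ b ≡ x [ZMOD (s : ℤ)] ∧ x ≤ b}).ncard}

/-- The `s`-core of a partition. -/
noncomputable def core (s : ℕ) (l : SeqPartition) : SeqPartition :=
  ofBeta (coreBeta s (beta 0 l))

/-- `λ` is an `s`-core. -/
def IsCore (s : ℕ) (l : SeqPartition) : Prop := core s l = l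

/-- The `s`-weight of `λ`. -/
noncomputable def wt (s : ℕ) (l : SeqPartition) : ℕ := (size l - size (core s l)) / s

/-- The component of the `s`-quotient of `λ` indexed by `j : ZMod s`. -/
noncomputable def quot (s : ℕ) (l : SeqPartition) (j : ZMod s) : SeqPartition :=
  ofBeta {z : ℤ | ((j.val : ℤ) + (s : ℤ) * z) ∈ beta 0 l}

/-- The `s`-set entry `Γ_j(λ)`: the smallest integer in the class `j` mod `s`
not lying in the beta-set of the `s`-core of `λ`. -/
noncomputable def sSet (s : ℕ) (l : SeqPartition) (j : ZMod s) : ℤ :=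
  sInf {x : ℤ | (x : ZMod s) = j ∧ x ∉ beta 0 (core s l)}

/-- `λ` is an `[s:t]`-core. -/
def IsGenCore (s t : ℕ) (l : SeqPartition) : Prop :=
  wt s (core t l) = wt s l

/-- The level `t` action of the generator `w_i` of the affine symmetric group `W_s` on `ℤ`. -/
def genActZ (s t : ℕ) (i : ZMod s) (n : ℤ) : ℤ :=
  if (n : ZMod s) = (i - 1) * (t : ZMod s) - ((((s : ℤ) - 1) * ((t : ℤ) - 1) / 2 : ℤ) : ZMod s)
    then n + t
  else if (n : ZMod s) = i * (t : ZMod s) - ((((s : ℤ) - 1) * ((t : ℤ) - 1) / 2 : ℤ) : ZMod s)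
    then n - t
  else n

/-- The level `t` action of the generator `w_i` of `W_s` on partitions, via beta-sets. -/
noncomputable def genAct (s t : ℕ) (i : ZMod s) (l : SeqPartition) : SeqPartition :=
  ofBeta (genActZ s t i '' beta 0 l)

/-- The action of a word in the generators of `W_s`, at level `t`, on partitions. -/
noncomputable def wordAct (s t : ℕ) (w : List (ZMod s)) (l : SeqPartition) : SeqPartition :=
  w.foldr (genAct s t) l

/-- `λ` and `μ` lie in the same orbit for the level `t` action of `W_s`. -/
def SameOrbit (s t : ℕ) (l m : SeqPartition) : Prop :=
  ∃ w : List (ZMod s), wordAct s t w l = m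

/-- `λ` and `μ` lie in the same orbit for the commuting actions of `W_s` (level `t`)
and `W_t` (level `s`). -/
def SameOrbit2 (s t : ℕ) (l m : SeqPartition) : Prop :=
  ∃ a : List (ZMod s), ∃ b : List (ZMod t), wordAct s t a (wordAct t s b l) = m

/-- The `t`-weighted `s`-quotient of `λ`: the multiset of pairs
`(Γ_i(λ) + tℤ, λ^(i))` over `i ∈ ℤ/sℤ`. -/
noncomputable def twq (s t : ℕ) (l : SeqPartition) : Multiset (ZMod t × SeqPartition) :=
  ((List.range s).map (fun i =>
    (((sSet s l (i : ZMod s) : ℤ) : ZMod t), quot s l (i : ZMod s))) : Multiset _)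

/-- The largest `(s,t)`-core `κ_{s,t}`: the partition whose beta-set is the set of
integers not expressible as a non-negative integer combination of `s` and `t`. -/
noncomputable def kappa (s t : ℕ) : SeqPartition :=
  ofBeta {x : ℤ | ¬ ∃ a b : ℕ, x = (a : ℤ) * s + (b : ℤ) * t}

end SeqPartition

/-!
In beta-set language, `τ` is a `t`-core iff its beta-set `X` is closed under `x ↦ x - t`, and the
`s`-core is formed runner by runner on the `s`-abacus: each runner of the core is the half-line
below the runner's charge. For coprime `s, t` every integer is uniquely `x = a s + b t` with
`0 ≤ b < s`, and up to a shift `d` the beta-set of `κ_{s,t}` is `{x | a(x) < 0}`. Since every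
runner of `X` carries the same partition `υ`, its charge can be read off the core, which gives
`x ∈ X ↔ a(x - d) ∈ β(υ)`. Finally `a(x - t)` is `a(x)` or `a(x) - t`, so the closure of `β(υ)`
under `y ↦ y - t` passes to `X`.
-/

namespace SeqPartition

def betaSeq (r : ℤ) (l : SeqPartition) (n : ℕ) : ℤ := (l.f n : ℤ) - (n + 1) + r

lemma betaSeq_strictAnti (r : ℤ) (l : SeqPartition) : StrictAnti (betaSeq r l) := by
  refine strictAnti_nat_of_succ_lt fun n => ?_
  have := l.antitone (Nat.le_add_right n 1)
  simp only [betaSeq]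
  push_cast
  omega

lemma beta_eq_range (r : ℤ) (l : SeqPartition) : beta r l = Set.range (betaSeq r l) := by
  ext x
  simp [beta, betaSeq, eq_comm]

lemma mem_beta_iff {r x : ℤ} {l : SeqPartition} : x ∈ beta r l ↔ x - r ∈ beta 0 l := by
  constructor <;> rintro ⟨n, hn⟩ <;> exact ⟨n, by omega⟩

lemma eq_of_beta_eq {r r' : ℤ} {l l' : SeqPartition} (h : beta r l = beta r' l') : l = l' := by
  rw [beta_eq_range, beta_eq_range] at h
  have hseq : betaSeq r l = betaSeq r' l' := by
    have := (StrictMono.range_inj (betaSeq_strictAnti r l).dual_right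
      (betaSeq_strictAnti r' l').dual_right).1 (by rw [Set.range_comp, Set.range_comp, h])
    exact funext fun n => congrFun this n
  obtain ⟨N, hN⟩ := l.eventually_zero
  obtain ⟨N', hN'⟩ := l'.eventually_zero
  have hr : r = r' := by
    have := congrFun hseq (max N N')
    simp only [betaSeq, hN _ (le_max_left N N'), hN' _ (le_max_right N N')] at this
    omega
  cases l
  cases l'
  congr
  funext n
  have := congrFun hseq n
  simp only [betaSeq] at this
  omega

lemma ofBeta_beta (r : ℤ) (l : SeqPartition) : ofBeta (beta r l) = l := by
  have h : ∃ l' : SeqPartition, ∃ r', beta r' l' = beta r l := ⟨l, r, rfl⟩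
  rw [ofBeta, dif_pos h]
  exact eq_of_beta_eq h.choose_spec.choose_spec

def IsBetaSet (B : Set ℤ) : Prop := BddAbove B ∧ ∃ k, Set.Iic k ⊆ B

lemma Iic_subset_beta {l : SeqPartition} {N : ℕ} (hN : ∀ n, N ≤ n → l.f n = 0) (r : ℤ) :
    Set.Iic (r - N - 1) ⊆ beta r l := fun x hx =>
  ⟨(r - 1 - x).toNat, by rw [Set.mem_Iic] at hx; rw [hN _ (by omega)]; omega⟩

lemma isBetaSet_beta (r : ℤ) (l : SeqPartition) : IsBetaSet (beta r l) := by
  obtain ⟨N, hN⟩ := l.eventually_zero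
  refine ⟨⟨l.f 0 - 1 + r, ?_⟩, _, Iic_subset_beta hN r⟩
  rintro _ ⟨n, rfl⟩
  have := l.antitone n.zero_le
  omega

lemma exists_beta_eq_range {g : ℕ → ℤ} (hg : StrictAnti g) {c : ℕ}
    (hc : ∀ n, c ≤ n → g n = g c - (n - c)) : ∃ l r, beta r l = Set.range g := by
  have hanti : Antitone fun n => g n + n := antitone_nat_of_succ_le fun n => by
    have := hg (Nat.lt_add_one n)
    push_cast
    omega
  have hge : ∀ n, g c + c ≤ g n + n := fun n => by
    rcases le_total n c with h | h
    · exact hanti h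
    · have := hc n h
      omega
  refine ⟨⟨fun n => (g n + n - (g c + c)).toNat, fun m n hmn => ?_, c, fun n hn => ?_⟩,
    g c + c + 1, ?_⟩
  · have := hanti hmn
    simp only at this
    omega
  · have := hc n hn
    omega
  · rw [beta_eq_range]
    congr
    funext n
    have := hge n
    simp only [betaSeq]
    omega

lemma IsBetaSet.exists_beta_eq {B : Set ℤ} (hB : IsBetaSet B) : ∃ l r, beta r l = B := by
  obtain ⟨⟨M, hM⟩, k, hk⟩ := hB
  -- `Nat.nth p` lists the depths `M - x` of the elements `x ∈ B` in increasing order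
  set p : ℕ → Prop := fun m => M - m ∈ B
  set L := (M - k).toNat
  have hpL : ∀ m, L ≤ m → p m := fun m hm => hk (by rw [Set.mem_Iic]; omega)
  have hinf : (Set.ofPred p).Infinite :=
    Set.infinite_of_forall_exists_gt fun m => ⟨m + L + 1, hpL _ (by omega), by omega⟩
  have hcount : ∀ i, Nat.count p (L + i) = Nat.count p L + i := by
    intro i
    induction i with
    | zero => rfl
    | succ i ih => rw [← add_assoc, Nat.count_succ_eq_succ_count (hpL _ (by omega)), ih, add_assoc]
  have hnth : ∀ i, Nat.nth p (Nat.count p L + i) = L + i := fun i => by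
    rw [← hcount, Nat.nth_count (hpL _ (by omega))]
  obtain ⟨l, r, h⟩ := exists_beta_eq_range (g := fun n => M - Nat.nth p n)
    (fun a b hab => by simpa using Nat.nth_strictMono hinf hab) (c := Nat.count p L)
    (fun n hn => by
      obtain ⟨i, rfl⟩ := Nat.exists_eq_add_of_le hn
      have h0 := hnth 0
      rw [add_zero] at h0
      simp only [hnth, h0]
      push_cast
      ring)
  refine ⟨l, r, h.trans ?_⟩
  ext x
  constructor
  · rintro ⟨n, rfl⟩
    exact Nat.nth_mem_of_infinite hinf n
  · intro hx
    have hxM := hM hx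
    have hpx : p (M - x).toNat := by
      show M - _ ∈ B
      rwa [Int.toNat_of_nonneg (by omega), sub_sub_cancel]
    obtain ⟨n, hn⟩ : (M - x).toNat ∈ Set.range (Nat.nth p) := by
      rw [Nat.range_nth_of_infinite hinf]
      exact hpx
    exact ⟨n, by simp only [hn]; omega⟩

lemma exists_beta_ofBeta {B : Set ℤ} (hB : IsBetaSet B) : ∃ r, beta r (ofBeta B) = B := by
  have h := hB.exists_beta_eq
  rw [ofBeta, dif_pos h]
  exact h.choose_spec


lemma beta_inter_Ici_eq_image {u : SeqPartition} {N : ℕ} (hN : ∀ n, N ≤ n → u.f n = 0)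
    (r : ℤ) : beta r u ∩ Set.Ici (r - N) = betaSeq r u '' Set.Iio N := by
  ext w
  simp only [beta_eq_range, Set.mem_inter_iff, Set.mem_range, Set.mem_Ici, Set.mem_image,
    Set.mem_Iio]
  constructor
  · rintro ⟨⟨n, rfl⟩, hn⟩
    refine ⟨n, ?_, rfl⟩
    by_contra h
    simp only [betaSeq, hN n (by omega)] at hn
    omega
  · rintro ⟨n, hn, rfl⟩
    exact ⟨⟨n, rfl⟩, by simp only [betaSeq]; omega⟩

lemma ncard_beads_sub_ncard_gaps (r z : ℤ) (u : SeqPartition) :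
    ({w | w ∈ beta r u ∧ z ≤ w}.ncard : ℤ) - {w | w ∉ beta r u ∧ w < z}.ncard = r - z := by
  obtain ⟨N₀, hN₀⟩ := u.eventually_zero
  set N := N₀ + (r - z).toNat
  have hN : ∀ n, N ≤ n → u.f n = 0 := fun n hn => hN₀ n (by omega)
  -- every position below `r - N` is a bead, and exactly `N` beads lie above it
  set T := beta r u ∩ Set.Ici (r - N)
  have hT : T = betaSeq r u '' Set.Iio N := beta_inter_Ici_eq_image hN r
  have hTfin : T.Finite := hT ▸ (Set.finite_Iio N).image _
  have hTcard : T.ncard = N := by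
    rw [hT, Set.ncard_image_of_injective _ (betaSeq_strictAnti r u).injective, Set.ncard_Iio_nat]
  have hIco : ((Set.Ico (r - N) z).ncard : ℤ) = z - (r - N) := by
    rw [← Finset.coe_Ico, Set.ncard_coe_finset, Int.card_Ico]
    omega
  have hbeads : T \ Set.Ico (r - N) z = {w | w ∈ beta r u ∧ z ≤ w} := by
    ext w
    simp only [T, Set.mem_sdiff, Set.mem_inter_iff, Set.mem_Ici, Set.mem_ofPred_eq, Set.mem_Ico]
    constructor
    · rintro ⟨⟨hw, h1⟩, h2⟩
      exact ⟨hw, by omega⟩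
    · rintro ⟨hw, h⟩
      exact ⟨⟨hw, by omega⟩, by omega⟩
  have hgaps : Set.Ico (r - N) z \ beta r u = {w | w ∉ beta r u ∧ w < z} := by
    ext w
    simp only [Set.mem_sdiff, Set.mem_ofPred_eq, Set.mem_Ico]
    constructor
    · rintro ⟨⟨-, h⟩, hw⟩
      exact ⟨hw, h⟩
    · rintro ⟨hw, h⟩
      refine ⟨⟨?_, h⟩, hw⟩
      by_contra hlt
      exact hw (Iic_subset_beta hN r (by rw [Set.mem_Iic]; omega))
  have hinter : T ∩ Set.Ico (r - N) z = Set.Ico (r - N) z ∩ beta r u := by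
    ext w
    simp only [T, Set.mem_inter_iff, Set.mem_Ici, Set.mem_Ico]
    tauto
  have hsplitT := Set.ncard_inter_add_ncard_sdiff_eq_ncard T (Set.Ico (r - N) z) hTfin
  have hsplitIco := Set.ncard_inter_add_ncard_sdiff_eq_ncard (Set.Ico (r - N) z) (beta r u)
  rw [hinter, hbeads, hTcard] at hsplitT
  rw [hgaps] at hsplitIco
  omega

lemma coreBeta_one_beta (r : ℤ) (u : SeqPartition) : coreBeta 1 (beta r u) = Set.Iio r := by
  ext z
  have := ncard_beads_sub_ncard_gaps r z u
  simp only [coreBeta, Nat.cast_one, Int.modEq_one, true_and, Set.mem_ofPred_eq, Set.mem_Iio]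
  omega

def runner (s : ℕ) (j : ℤ) (B : Set ℤ) : Set ℤ := {z | j + s * z ∈ B}

variable {s : ℕ}

lemma setOf_modEq_eq_image (j z : ℤ) (P Q : ℤ → Prop) :
    {y | P y ∧ y ≡ j + s * z [ZMOD s] ∧ Q y} =
      (fun w => j + s * w) '' {w | P (j + s * w) ∧ Q (j + s * w)} := by
  ext y
  constructor
  · rintro ⟨hP, hmod, hQ⟩
    obtain ⟨c, hc⟩ := hmod.dvd
    obtain rfl : y = j + s * (z - c) := by linear_combination -hc
    exact ⟨z - c, ⟨hP, hQ⟩, rfl⟩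
  · rintro ⟨w, ⟨hP, hQ⟩, rfl⟩
    refine ⟨hP, ?_, hQ⟩
    simp [Int.ModEq, Int.add_mul_emod_self_left]

lemma runner_coreBeta (hs : 0 < s) (j : ℤ) (B : Set ℤ) :
    runner s j (coreBeta s B) = coreBeta 1 (runner s j B) := by
  have hs' : (0 : ℤ) < s := by exact_mod_cast hs
  have hinj : Function.Injective fun w : ℤ => j + s * w := fun a b h => by
    simpa [hs.ne'] using h
  ext z
  simp only [runner, coreBeta, Set.mem_ofPred_eq, Nat.cast_one, Int.modEq_one, true_and]
  rw [setOf_modEq_eq_image j z (· ∉ B) (· < j + s * z),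
    setOf_modEq_eq_image j z (· ∈ B) (j + s * z ≤ ·),
    Set.ncard_image_of_injective _ hinj, Set.ncard_image_of_injective _ hinj]
  simp only [add_lt_add_iff_left, add_le_add_iff_left, mul_lt_mul_iff_right₀ hs',
    mul_le_mul_iff_right₀ hs']

lemma IsBetaSet.coreBeta {B : Set ℤ} (hB : IsBetaSet B) (p : ℕ) : IsBetaSet (coreBeta p B) := by
  obtain ⟨⟨M, hM⟩, k, hk⟩ := hB
  have hfin : ∀ x, {b | b ∈ B ∧ b ≡ x [ZMOD p] ∧ x ≤ b}.Finite := fun x =>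
    (Set.finite_Icc x M).subset fun b ⟨hb, _, hxb⟩ => ⟨hxb, hM hb⟩
  refine ⟨⟨M, fun x hx => ?_⟩, k, fun x hx => ?_⟩
  · by_contra hMx
    have hempty : {b | b ∈ B ∧ b ≡ x [ZMOD p] ∧ x ≤ b} = ∅ :=
      Set.eq_empty_of_forall_notMem fun b ⟨hb, _, hxb⟩ => by have := hM hb; omega
    simp only [SeqPartition.coreBeta, Set.mem_ofPred_eq, hempty, Set.ncard_empty] at hx
    omega
  · have hempty : {y | y ∉ B ∧ y ≡ x [ZMOD p] ∧ y < x} = ∅ :=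
      Set.eq_empty_of_forall_notMem fun y ⟨hy, _, hyx⟩ =>
        hy (hk (by rw [Set.mem_Iic] at hx ⊢; omega))
    simp only [SeqPartition.coreBeta, Set.mem_ofPred_eq, hempty, Set.ncard_empty]
    exact (Set.ncard_pos (hfin x)).2 ⟨x, hk hx, Int.ModEq.refl x, le_rfl⟩

lemma IsBetaSet.runner {B : Set ℤ} (hB : IsBetaSet B) (hs : 0 < s) (j : ℤ) :
    IsBetaSet (runner s j B) := by
  obtain ⟨⟨M, hM⟩, k, hk⟩ := hB
  have hs' : (1 : ℤ) ≤ s := by exact_mod_cast hs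
  refine ⟨⟨max (M - j) 0, fun z hz => ?_⟩, min (k - j) 0, fun z hz => hk ?_⟩
  · have := hM hz
    rcases le_or_gt z 0 with h | h
    · exact le_max_of_le_right h
    · exact le_max_of_le_left (by nlinarith)
  · simp only [Set.mem_Iic, le_min_iff] at hz ⊢
    nlinarith

lemma exists_beta_core (p : ℕ) (l : SeqPartition) :
    ∃ r, beta r (core p l) = coreBeta p (beta 0 l) :=
  exists_beta_ofBeta ((isBetaSet_beta 0 l).coreBeta p)

lemma exists_beta_quot (hs : 0 < s) (l : SeqPartition) (j : ZMod s) :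
    ∃ r, beta r (quot s l j) = runner s j.val (beta 0 l) :=
  exists_beta_ofBeta ((isBetaSet_beta 0 l).runner hs _)

lemma sub_mem_coreBeta {B : Set ℤ} (hB : IsBetaSet B) (hs : 0 < s) {x : ℤ}
    (hx : x ∈ coreBeta s B) : x - s ∈ coreBeta s B := by
  obtain ⟨u, r, hr⟩ := (hB.runner hs x).exists_beta_eq
  have hrun := runner_coreBeta hs x B
  rw [← hr, coreBeta_one_beta] at hrun
  have h0 : (0 : ℤ) ∈ runner s x (coreBeta s B) := by simpa [runner] using hx
  have h1 : (-1 : ℤ) ∈ runner s x (coreBeta s B) := by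
    rw [hrun, Set.mem_Iio] at h0 ⊢
    omega
  simpa [runner, sub_eq_add_neg] using h1

lemma mem_of_modEq_of_le {B : Set ℤ} (hcl : ∀ x ∈ B, x - s ∈ B) {b y : ℤ} (hb : b ∈ B)
    (hyb : y ≡ b [ZMOD s]) (hle : y ≤ b) : y ∈ B := by
  have hiter : ∀ n : ℕ, b - s * n ∈ B := fun n => by
    induction n with
    | zero => simpa using hb
    | succ n ih => simpa [mul_add, sub_add_eq_sub_sub] using hcl _ ih
  obtain ⟨c, hc⟩ := hyb.dvd
  rcases Nat.eq_zero_or_pos s with rfl | hs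
  · obtain rfl : y = b := by simp only [Nat.cast_zero, zero_mul] at hc; omega
    exact hb
  · have hc0 : 0 ≤ c := by
      by_contra h
      have : (s : ℤ) * c < 0 := mul_neg_of_pos_of_neg (by exact_mod_cast hs) (by omega)
      omega
    simpa [Int.toNat_of_nonneg hc0, ← hc] using hiter c.toNat

lemma coreBeta_eq_self {B : Set ℤ} (hB : BddAbove B) (hcl : ∀ x ∈ B, x - s ∈ B) :
    coreBeta s B = B := by
  obtain ⟨M, hM⟩ := hB
  ext x
  simp only [coreBeta, Set.mem_ofPred_eq]
  constructor
  · intro hx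
    by_contra hxB
    have hempty : {b | b ∈ B ∧ b ≡ x [ZMOD s] ∧ x ≤ b} = ∅ :=
      Set.eq_empty_of_forall_notMem fun b ⟨hb, hxb, hle⟩ =>
        hxB (mem_of_modEq_of_le hcl hb hxb.symm hle)
    rw [hempty, Set.ncard_empty] at hx
    omega
  · intro hx
    have hempty : {y | y ∉ B ∧ y ≡ x [ZMOD s] ∧ y < x} = ∅ :=
      Set.eq_empty_of_forall_notMem fun y ⟨hy, hyx, hlt⟩ =>
        hy (mem_of_modEq_of_le hcl hx hyx hlt.le)
    have hfin : {b | b ∈ B ∧ b ≡ x [ZMOD s] ∧ x ≤ b}.Finite :=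
      (Set.finite_Icc x M).subset fun b ⟨hb, _, hxb⟩ => ⟨hxb, hM hb⟩
    rw [hempty, Set.ncard_empty]
    exact (Set.ncard_pos hfin).2 ⟨x, hx, Int.ModEq.refl x, le_rfl⟩

theorem isCore_iff_sub_mem (hs : 0 < s) (l : SeqPartition) :
    IsCore s l ↔ ∀ x ∈ beta 0 l, x - s ∈ beta 0 l := by
  constructor
  · intro hcore x hx
    obtain ⟨r, hr⟩ := exists_beta_core s l
    rw [hcore] at hr
    have hxr : x + r ∈ coreBeta s (beta 0 l) := by
      rw [← hr, mem_beta_iff]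
      simpa using hx
    have := sub_mem_coreBeta (isBetaSet_beta 0 l) hs hxr
    rw [← hr, mem_beta_iff] at this
    simpa [sub_right_comm] using this
  · intro hcl
    rw [IsCore, core, coreBeta_eq_self (isBetaSet_beta 0 l).1 hcl, ofBeta_beta]

theorem eq_preimage_beta_of_runner_eq {B : Set ℤ} {u : SeqPartition} {φ : ℤ → ℤ} (hs : 0 < s)
    (hφ : ∀ x c, φ (x + s * c) = φ x + c) (hcore : ∀ x, x ∈ coreBeta s B ↔ φ x < 0)
    (hrun : ∀ x, ∃ r, runner s x B = beta r u) : B = φ ⁻¹' beta 0 u := by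
  ext x
  obtain ⟨r, hr⟩ := hrun x
  have hcharge : ∀ z, z < r ↔ φ x + z < 0 := fun z => by
    rw [← hφ, ← hcore, ← Set.mem_Iio, ← coreBeta_one_beta, ← hr, ← runner_coreBeta hs]
    rfl
  have hr' : r = -φ x := by
    have := hcharge r
    have := hcharge (r - 1)
    omega
  have h0 : x ∈ B ↔ (0 : ℤ) ∈ runner s x B := by simp [runner]
  rw [h0, hr, mem_beta_iff, hr', Set.mem_preimage]
  simp

lemma exists_runner_eq_beta (hs : 0 < s) {l u : SeqPartition} (hquot : ∀ j, quot s l j = u)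
    (x : ℤ) : ∃ r, runner s x (beta 0 l) = beta r u := by
  have : NeZero s := ⟨hs.ne'⟩
  obtain ⟨r, hr⟩ := exists_beta_quot hs l (x : ZMod s)
  rw [hquot, ZMod.val_intCast] at hr
  refine ⟨r - x / s, ?_⟩
  ext z
  have h := Set.ext_iff.1 hr (x / s + z)
  simp only [runner, Set.mem_ofPred_eq] at h ⊢
  rw [mem_beta_iff (l := u)]
  rw [mem_beta_iff, show x % s + s * (x / s + z) = x + s * z by linear_combination Int.emod_add_mul_ediv x s,
    show x / s + z - r = z - (r - x / s) by ring] at h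
  exact h.symm

variable {t : ℕ}

-- `Nat.gcdB s t` inverts `t` modulo `s`, so `x = sCoeff s t x * s + tCoeff s t x * t`
-- with `0 ≤ tCoeff s t x < s`.
def tCoeff (s t : ℕ) (x : ℤ) : ℤ := x * Nat.gcdB s t % s

def sCoeff (s t : ℕ) (x : ℤ) : ℤ := (x - tCoeff s t x * t) / s

lemma tCoeff_nonneg (hs : 0 < s) (x : ℤ) : 0 ≤ tCoeff s t x :=
  Int.emod_nonneg _ (by exact_mod_cast hs.ne')

lemma tCoeff_lt (hs : 0 < s) (x : ℤ) : tCoeff s t x < s :=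
  Int.emod_lt_of_pos _ (by exact_mod_cast hs)

lemma sCoeff_mul_add_tCoeff_mul (hs : 0 < s) (hst : s.Coprime t) (x : ℤ) :
    sCoeff s t x * s + tCoeff s t x * t = x := by
  have hbez : (1 : ℤ) = s * Nat.gcdA s t + t * Nat.gcdB s t := by
    have := Nat.gcd_eq_gcd_ab s t
    rwa [hst.gcd_eq_one, Nat.cast_one] at this
  have hdvd : x - tCoeff s t x * t = s * (x * Nat.gcdA s t + x * Nat.gcdB s t / s * t) := by
    rw [tCoeff, Int.emod_def]
    linear_combination x * hbez
  rw [sCoeff, hdvd, Int.mul_ediv_cancel_left _ (by exact_mod_cast hs.ne')]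
  linear_combination -hdvd

lemma eq_sCoeff_of_eq (hs : 0 < s) (hst : s.Coprime t) {x a b : ℤ} (h : x = a * s + b * t)
    (hb₀ : 0 ≤ b) (hbs : b < s) : a = sCoeff s t x := by
  have hspec := sCoeff_mul_add_tCoeff_mul hs hst x
  have hdvd : (s : ℤ) ∣ (b - tCoeff s t x) * t :=
    ⟨sCoeff s t x - a, by linear_combination -h - hspec⟩
  have hb : b = tCoeff s t x := by
    have h₀ := tCoeff_nonneg (t := t) hs x
    have h₁ := tCoeff_lt (t := t) hs x
    have := Int.eq_zero_of_abs_lt_dvd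
      ((Nat.isCoprime_iff_coprime.2 hst).dvd_of_dvd_mul_right hdvd) (by rw [abs_lt]; omega)
    omega
  have : (a - sCoeff s t x) * s = 0 := by linear_combination -h - hspec - t * hb
  rcases mul_eq_zero.1 this with h' | h'
  · linarith
  · exact absurd h' (by exact_mod_cast hs.ne')

lemma sCoeff_add_mul (hs : 0 < s) (hst : s.Coprime t) (x c : ℤ) :
    sCoeff s t (x + s * c) = sCoeff s t x + c := by
  have hspec := sCoeff_mul_add_tCoeff_mul hs hst x
  exact (eq_sCoeff_of_eq hs hst (by linear_combination -hspec) (tCoeff_nonneg hs x)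
    (tCoeff_lt hs x)).symm

lemma sCoeff_sub_eq_or (hs : 0 < s) (hst : s.Coprime t) (x : ℤ) :
    sCoeff s t (x - t) = sCoeff s t x ∨ sCoeff s t (x - t) = sCoeff s t x - t := by
  have hspec := sCoeff_mul_add_tCoeff_mul hs hst x
  rcases (tCoeff_nonneg (t := t) hs x).eq_or_lt with h | h
  · right
    exact (eq_sCoeff_of_eq hs hst (b := s - 1) (by linear_combination -hspec - t * h)
      (by omega) (by omega)).symm
  · left
    exact (eq_sCoeff_of_eq hs hst (b := tCoeff s t x - 1) (by linear_combination -hspec)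
      (by omega) (by linarith [tCoeff_lt (t := t) hs x])).symm

lemma exists_nat_iff_sCoeff_nonneg (hs : 0 < s) (hst : s.Coprime t) (x : ℤ) :
    (∃ a b : ℕ, x = a * s + b * t) ↔ 0 ≤ sCoeff s t x := by
  have hs' : (0 : ℤ) < s := by exact_mod_cast hs
  constructor
  · rintro ⟨a, b, rfl⟩
    rw [← eq_sCoeff_of_eq hs hst (a := a + b / s * t) (b := b % s)
      (by linear_combination -(t : ℤ) * Int.emod_add_mul_ediv (b : ℤ) s)
      (Int.emod_nonneg _ hs'.ne') (Int.emod_lt_of_pos _ hs')]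
    have := Int.ediv_nonneg (Int.natCast_nonneg b) hs'.le
    positivity
  · intro h
    refine ⟨(sCoeff s t x).toNat, (tCoeff s t x).toNat, ?_⟩
    rw [Int.toNat_of_nonneg h, Int.toNat_of_nonneg (tCoeff_nonneg hs x)]
    exact (sCoeff_mul_add_tCoeff_mul hs hst x).symm

lemma exists_beta_kappa (hs : 0 < s) (hst : s.Coprime t) :
    ∃ r, beta r (kappa s t) = {x | sCoeff s t x < 0} := by
  have hset : {x : ℤ | ¬ ∃ a b : ℕ, x = a * s + b * t} = {x | sCoeff s t x < 0} := by
    ext x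
    simp only [Set.mem_ofPred_eq, exists_nat_iff_sCoeff_nonneg hs hst, not_le]
  rw [kappa, hset]
  refine exists_beta_ofBeta ⟨⟨s * t, fun x hx => ?_⟩, -1, fun x hx => ?_⟩ <;>
    have hspec := sCoeff_mul_add_tCoeff_mul hs hst x
  · have h₁ : sCoeff s t x * s ≤ -1 * s :=
      mul_le_mul_of_nonneg_right (by simp only [Set.mem_ofPred_eq] at hx; omega) (by positivity)
    have h₂ : tCoeff s t x * t ≤ s * t :=
      mul_le_mul_of_nonneg_right (tCoeff_lt hs x).le (by positivity)
    linarith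
  · simp only [Set.mem_Iic, Set.mem_ofPred_eq] at hx ⊢
    by_contra h
    have h₁ := mul_nonneg (not_lt.1 h) (Int.natCast_nonneg s)
    have h₂ := mul_nonneg (tCoeff_nonneg (t := t) hs x) (Int.natCast_nonneg t)
    linarith

end SeqPartition

open SeqPartition in
/-- If `υ` is a `t`-core, then the partition with `s`-core `κ_{s,t}` and `s`-quotient
`(υ, ..., υ)` is a `t`-core. -/
theorem isCore_of_kappa_quot (s t : ℕ) (hs : 0 < s) (ht : 0 < t) (hst : Nat.Coprime s t)
    (ups : SeqPartition) (hups : IsCore t ups) (tau : SeqPartition)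
    (h1 : core s tau = kappa s t) (h2 : ∀ j : ZMod s, quot s tau j = ups) :
    IsCore t tau := by
  obtain ⟨rκ, hκ⟩ := exists_beta_kappa hs hst
  obtain ⟨rc, hc⟩ := exists_beta_core s tau
  rw [h1] at hc
  set φ : ℤ → ℤ := fun x => sCoeff s t (x - (rc - rκ))
  have hcore : ∀ x, x ∈ coreBeta s (beta 0 tau) ↔ φ x < 0 := fun x => by
    rw [← hc, mem_beta_iff, show x - rc = x - (rc - rκ) - rκ by ring, ← mem_beta_iff, hκ]
    rfl
  have htau : beta 0 tau = φ ⁻¹' beta 0 ups := eq_preimage_beta_of_runner_eq hs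
    (fun x c => by simp only [φ, add_sub_right_comm, sCoeff_add_mul hs hst]) hcore
    (exists_runner_eq_beta hs h2)
  have hups_sub := (isCore_iff_sub_mem ht ups).1 hups
  refine (isCore_iff_sub_mem ht tau).2 fun x hx => ?_
  rw [htau, Set.mem_preimage] at hx ⊢
  simp only [φ, sub_right_comm x (t : ℤ)] at hx ⊢
  rcases sCoeff_sub_eq_or hs hst (x - (rc - rκ)) with h | h <;> rw [h]
  · exact hx
  · exact hups_sub _ hx
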